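/- Fix W, W̃ ∈ ℂ^{n×n} and ε ∈ (0, 2/3), and suppose W̃ is a complex ε-approximation of W. Let F ⊆ [n] be such that I_{|F|} − W_{FF} and I_{|F|} − W̃_{FF} are invertible, and let C = [n] \ F. Then I_{|C|} − Sc(I_n − W̃, C) is a complex ε/(1 − 3ε/2)-approximation of I_{|C|} − Sc(I_n − W, C). -/

import Mathlib

open Matrix

noncomputable section

/-- The sesquilinear form `x* A y`. -/
def sesq {m : Type*} [Fintype m] (A : Matrix m m ℂ) (x y : m → ℂ) : ℂ :=
  star x ⬝ᵥ (A *ᵥ y)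

/-- The squared Euclidean norm of a complex vector. -/
def vnormSq {m : Type*} [Fintype m] (x : m → ℂ) : ℝ :=
  ∑ i, Complex.normSq (x i)

/-- `W̃` is a *complex ε-approximation* of `W`. -/
def ComplexApprox {m : Type*} [Fintype m] (ε : ℝ) (W Wt : Matrix m m ℂ) : Prop :=
  ∀ x y : m → ℂ,
    ‖sesq (W - Wt) x y‖ ≤
      ε / 2 * (vnormSq x + vnormSq y - (sesq W x x + sesq W y y).re)

/-- The Schur complement `Sc(M, C) = M_CC − M_CF M_FF⁻¹ M_FC` of `M` onto the
set `C = {i | ¬ p i}`, where `F = {i | p i}`. -/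
def schurC {n : ℕ} (M : Matrix (Fin n) (Fin n) ℂ) (p : Fin n → Prop)
    [DecidablePred p] : Matrix {i : Fin n // ¬ p i} {i : Fin n // ¬ p i} ℂ :=
  M.submatrix (fun i : {i : Fin n // ¬ p i} => i.1) (fun j : {j : Fin n // ¬ p j} => j.1) -
    M.submatrix (fun i : {i : Fin n // ¬ p i} => i.1) (fun j : {j : Fin n // p j} => j.1) *
      (M.submatrix (fun i : {i : Fin n // p i} => i.1) (fun j : {j : Fin n // p j} => j.1))⁻¹ *
      M.submatrix (fun i : {i : Fin n // p i} => i.1) (fun j : {j : Fin n // ¬ p j} => j.1)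

/-! With `M = I - W` the hypothesis reads `|x*(M̃ - M)y| ≤ ε/2 (Re x*Mx + Re y*My)`, and
`I - Sc(I - W, C)` corresponds to the Schur complement `S = Sc(M, C)`. Given `x, y` on `C`,
extend `x` to `u` with `u*M` vanishing on `F`, and `y` to `v` with `M̃v` vanishing on `F`; then
`u*(M̃ - M)v = x*(S̃ - S)y` and `u*Mu = x*Sx`. The remaining term `Re v*Mv` is at most
`(1 + ε/2)/(1 - 3ε/2) · Re y*Sy`, by the hypothesis applied to `(v, v)` and the estimate above
with `x = y`. Averaging with the same estimate for the adjoints gives the claim. -/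

section Sesq

variable {m : Type*} [Fintype m]

theorem sesq_sub (A B : Matrix m m ℂ) (x y : m → ℂ) :
    sesq (A - B) x y = sesq A x y - sesq B x y := by
  simp only [sesq, sub_mulVec, dotProduct_sub]

theorem sesq_one_self [DecidableEq m] (x : m → ℂ) : sesq 1 x x = (vnormSq x : ℂ) := by
  simp only [sesq, vnormSq, one_mulVec, dotProduct, Pi.star_apply, Complex.ofReal_sum]
  refine Finset.sum_congr rfl fun i _ => ?_
  rw [Complex.normSq_eq_conj_mul_self]
  rfl

theorem sesq_conjTranspose (A : Matrix m m ℂ) (x y : m → ℂ) :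
    sesq Aᴴ x y = star (sesq A y x) := by
  rw [sesq, sesq, dotProduct_mulVec, ← star_mulVec, star_dotProduct]

theorem sesq_submatrix {m' : Type*} [Fintype m'] (e : m' ≃ m) (M : Matrix m m ℂ)
    (x y : m' → ℂ) : sesq (M.submatrix e e) x y = sesq M (x ∘ e.symm) (y ∘ e.symm) := by
  simp only [sesq, submatrix_mulVec_equiv, dotProduct]
  exact Fintype.sum_equiv e _ _ fun i => by simp

end Sesq

def SesqApprox {m : Type*} [Fintype m] (ε : ℝ) (M Mt : Matrix m m ℂ) : Prop :=
  ∀ x y : m → ℂ, ‖sesq (Mt - M) x y‖ ≤ ε / 2 * ((sesq M x x).re + (sesq M y y).re)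

section

variable {m : Type*} [Fintype m] {ε : ℝ} {M Mt : Matrix m m ℂ}

theorem complexApprox_one_sub_iff [DecidableEq m] :
    ComplexApprox ε (1 - M) (1 - Mt) ↔ SesqApprox ε M Mt := by
  have hre : ∀ x : m → ℂ, vnormSq x - (sesq (1 - M) x x).re = (sesq M x x).re := fun x => by
    rw [sesq_sub, sesq_one_self, Complex.sub_re, Complex.ofReal_re, sub_sub_cancel]
  refine forall₂_congr fun x y => ?_
  rw [sub_sub_sub_cancel_left, Complex.add_re, ← hre x, ← hre y]
  ring_nf

namespace SesqApprox

theorem re_sesq_self_nonneg (h : SesqApprox ε M Mt) (hε : 0 < ε) (z : m → ℂ) :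
    0 ≤ (sesq M z z).re := by
  have := (norm_nonneg _).trans (h z z)
  nlinarith

theorem abs_re_sesq_self_sub_le (h : SesqApprox ε M Mt) (z : m → ℂ) :
    |(sesq Mt z z).re - (sesq M z z).re| ≤ ε * (sesq M z z).re := by
  have := (Complex.abs_re_le_norm _).trans (h z z)
  rwa [sesq_sub, Complex.sub_re, ← two_mul, ← mul_assoc, div_mul_cancel₀ _ two_ne_zero] at this

theorem conjTranspose (h : SesqApprox ε M Mt) : SesqApprox ε Mᴴ Mtᴴ := fun x y => by
  simpa only [← conjTranspose_sub, sesq_conjTranspose, Complex.star_def, Complex.norm_conj,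
    Complex.conj_re, add_comm] using h y x

theorem submatrix {m' : Type*} [Fintype m'] (h : SesqApprox ε M Mt) (e : m' ≃ m) :
    SesqApprox ε (M.submatrix e e) (Mt.submatrix e e) := fun x y => by
  have := h (x ∘ e.symm) (y ∘ e.symm)
  rwa [← sesq_submatrix, ← sesq_submatrix, ← sesq_submatrix] at this

end SesqApprox

end

section

variable {F C R : Type*} [Fintype F] [DecidableEq F] [CommRing R]

def schurCompl (N : Matrix (F ⊕ C) (F ⊕ C) R) : Matrix C C R :=
  N.toBlocks₂₂ - N.toBlocks₂₁ * N.toBlocks₁₁⁻¹ * N.toBlocks₁₂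

def harmonicExt [Fintype C] (N : Matrix (F ⊕ C) (F ⊕ C) R) (x : C → R) : F ⊕ C → R :=
  Sum.elim (-(N.toBlocks₁₁⁻¹ *ᵥ (N.toBlocks₁₂ *ᵥ x))) x

theorem mulVec_harmonicExt [Fintype C] {N : Matrix (F ⊕ C) (F ⊕ C) R}
    (hA : IsUnit N.toBlocks₁₁) (x : C → R) :
    N *ᵥ harmonicExt N x = Sum.elim (0 : F → R) (schurCompl N *ᵥ x) := by
  have hdet : IsUnit N.toBlocks₁₁.det := (isUnit_iff_isUnit_det _).mp hA
  rw [harmonicExt]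
  conv_lhs => arg 1; rw [← fromBlocks_toBlocks N]
  rw [fromBlocks_mulVec, Sum.elim_comp_inl, Sum.elim_comp_inr]
  congr 1
  · rw [mulVec_neg, mulVec_mulVec, mulVec_mulVec, mul_nonsing_inv _ hdet,
      Matrix.one_mul, neg_add_cancel]
  · rw [mulVec_neg, mulVec_mulVec, mulVec_mulVec, schurCompl, sub_mulVec, Matrix.mul_assoc,
      neg_add_eq_sub]

@[simp]
theorem harmonicExt_comp_inr [Fintype C] (N : Matrix (F ⊕ C) (F ⊕ C) R) (x : C → R) :
    harmonicExt N x ∘ Sum.inr = x :=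
  rfl

theorem schurCompl_conjTranspose [StarRing R] (N : Matrix (F ⊕ C) (F ⊕ C) R) :
    schurCompl Nᴴ = (schurCompl N)ᴴ := by
  conv_lhs => rw [← fromBlocks_toBlocks N]
  simp only [schurCompl, fromBlocks_conjTranspose, toBlocks_fromBlocks₁₁, toBlocks_fromBlocks₁₂,
    toBlocks_fromBlocks₂₁, toBlocks_fromBlocks₂₂, conjTranspose_sub, conjTranspose_mul,
    conjTranspose_nonsing_inv, Matrix.mul_assoc]

end

section

variable {F C : Type*} [Fintype F] [Fintype C] [DecidableEq F] {N : Matrix (F ⊕ C) (F ⊕ C) ℂ}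

theorem sesq_harmonicExt_right (hA : IsUnit N.toBlocks₁₁) (u : F ⊕ C → ℂ) (y : C → ℂ) :
    sesq N u (harmonicExt N y) = sesq (schurCompl N) (u ∘ Sum.inr) y := by
  conv_lhs => rw [sesq, mulVec_harmonicExt hA, ← Sum.elim_comp_inl_inr u]
  rw [Function.star_sumElim, sumElim_dotProduct_sumElim, dotProduct_zero, zero_add, sesq]

theorem sesq_harmonicExt_left (hA : IsUnit N.toBlocks₁₁) (x : C → ℂ) (v : F ⊕ C → ℂ) :
    sesq N (harmonicExt Nᴴ x) v = sesq (schurCompl N) x (v ∘ Sum.inr) := by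
  have hA' : IsUnit Nᴴ.toBlocks₁₁ := (isUnit_conjTranspose _).mpr hA
  rw [← star_star (sesq N _ _), ← sesq_conjTranspose, sesq_harmonicExt_right hA',
    schurCompl_conjTranspose, sesq_conjTranspose, star_star]

end

namespace SesqApprox

variable {F C : Type*} [Fintype F] [Fintype C] [DecidableEq F] {ε : ℝ}
  {N Nt : Matrix (F ⊕ C) (F ⊕ C) ℂ}

theorem norm_sesq_schurCompl_sub_le (h : SesqApprox ε N Nt) (hA : IsUnit N.toBlocks₁₁)
    (hAt : IsUnit Nt.toBlocks₁₁) (x y : C → ℂ) :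
    ‖sesq (schurCompl Nt) x y - sesq (schurCompl N) x y‖ ≤
      ε / 2 * ((sesq (schurCompl N) x x).re +
        (sesq N (harmonicExt Nt y) (harmonicExt Nt y)).re) := by
  have := h (harmonicExt Nᴴ x) (harmonicExt Nt y)
  rwa [sesq_sub, sesq_harmonicExt_right hAt, sesq_harmonicExt_left hA,
    sesq_harmonicExt_left hA, harmonicExt_comp_inr, harmonicExt_comp_inr] at this

theorem re_sesq_harmonicExt_le (h : SesqApprox ε N Nt) (hA : IsUnit N.toBlocks₁₁)
    (hAt : IsUnit Nt.toBlocks₁₁) (y : C → ℂ) :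
    (1 - 3 * ε / 2) * (sesq N (harmonicExt Nt y) (harmonicExt Nt y)).re ≤
      (1 + ε / 2) * (sesq (schurCompl N) y y).re := by
  have hself := abs_le.mp (h.abs_re_sesq_self_sub_le (harmonicExt Nt y))
  rw [sesq_harmonicExt_right hAt, harmonicExt_comp_inr] at hself
  have hcross := (Complex.abs_re_le_norm _).trans (h.norm_sesq_schurCompl_sub_le hA hAt y y)
  rw [Complex.sub_re, abs_le] at hcross
  linarith [hself.1, hcross.2]

theorem one_sub_mul_norm_sesq_schurCompl_sub_le (h : SesqApprox ε N Nt) (h0 : 0 ≤ ε)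
    (h1 : ε ≤ 2 / 3) (hA : IsUnit N.toBlocks₁₁) (hAt : IsUnit Nt.toBlocks₁₁) (x y : C → ℂ) :
    (1 - 3 * ε / 2) * ‖sesq (schurCompl Nt) x y - sesq (schurCompl N) x y‖ ≤
      ε / 2 * ((1 - 3 * ε / 2) * (sesq (schurCompl N) x x).re +
        (1 + ε / 2) * (sesq (schurCompl N) y y).re) := by
  have hcross := mul_le_mul_of_nonneg_left (h.norm_sesq_schurCompl_sub_le hA hAt x y)
    (by linarith : 0 ≤ 1 - 3 * ε / 2)
  have henergy := mul_le_mul_of_nonneg_left (h.re_sesq_harmonicExt_le hA hAt y)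
    (by linarith : 0 ≤ ε / 2)
  linarith

theorem re_sesq_schurCompl_self_nonneg (h : SesqApprox ε N Nt) (h0 : 0 < ε)
    (hA : IsUnit N.toBlocks₁₁) (x : C → ℂ) : 0 ≤ (sesq (schurCompl N) x x).re := by
  simpa only [sesq_harmonicExt_right hA, harmonicExt_comp_inr] using
    h.re_sesq_self_nonneg h0 (harmonicExt N x)

theorem schurCompl (h : SesqApprox ε N Nt) (h0 : 0 < ε) (h1 : ε < 2 / 3)
    (hA : IsUnit N.toBlocks₁₁) (hAt : IsUnit Nt.toBlocks₁₁) :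
    SesqApprox (ε / (1 - 3 * ε / 2)) (schurCompl N) (schurCompl Nt) := by
  intro x y
  have hxy := h.one_sub_mul_norm_sesq_schurCompl_sub_le h0.le h1.le hA hAt x y
  have hyx := h.conjTranspose.one_sub_mul_norm_sesq_schurCompl_sub_le h0.le h1.le
    ((isUnit_conjTranspose _).mpr hA) ((isUnit_conjTranspose _).mpr hAt) y x
  simp only [schurCompl_conjTranspose, sesq_conjTranspose, Complex.star_def, ← map_sub,
    Complex.norm_conj, Complex.conj_re] at hyx
  have ha := h.re_sesq_schurCompl_self_nonneg h0 hA x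
  have hb := h.re_sesq_schurCompl_self_nonneg h0 hA y
  rw [sesq_sub, div_div, div_mul_eq_mul_div, le_div_iff₀ (by linarith)]
  linarith [mul_nonneg (mul_nonneg h0.le h0.le) (add_nonneg ha hb)]

end SesqApprox

/-- Complex ε-approximation (for `ε ∈ (0, 2/3)`) is preserved,
with parameter `ε/(1 − 3ε/2)`, by taking Schur complements:
`I − Sc(I − W̃, C)` approximates `I − Sc(I − W, C)`. -/
theorem schur_preserves_complex_approx {n : ℕ} (ε : ℝ) (h0 : 0 < ε) (h1 : ε < 2 / 3)
    (W Wt : Matrix (Fin n) (Fin n) ℂ) (p : Fin n → Prop) [DecidablePred p]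
    (hW : IsUnit ((1 : Matrix {i : Fin n // p i} {i : Fin n // p i} ℂ) -
      W.submatrix (fun i : {i : Fin n // p i} => i.1) (fun j : {j : Fin n // p j} => j.1)))
    (hWt : IsUnit ((1 : Matrix {i : Fin n // p i} {i : Fin n // p i} ℂ) -
      Wt.submatrix (fun i : {i : Fin n // p i} => i.1) (fun j : {j : Fin n // p j} => j.1)))
    (h : ComplexApprox ε W Wt) :
    ComplexApprox (ε / (1 - 3 * ε / 2))
      (1 - schurC (1 - W) p) (1 - schurC (1 - Wt) p) := by
  let e := Equiv.sumCompl p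
  have hschur (M : Matrix (Fin n) (Fin n) ℂ) : schurC M p = schurCompl (M.submatrix e e) := rfl
  have hblock (M : Matrix (Fin n) (Fin n) ℂ) : ((1 - M).submatrix e e).toBlocks₁₁ =
      1 - M.submatrix (fun i : {i : Fin n // p i} => i.1) (fun j : {j : Fin n // p j} => j.1) := by
    rw [← submatrix_one _ Subtype.val_injective]
    rfl
  rw [← sub_sub_cancel 1 W, ← sub_sub_cancel 1 Wt, complexApprox_one_sub_iff] at h
  rw [complexApprox_one_sub_iff, hschur, hschur]
  exact (h.submatrix e).schurCompl h0 h1 (hblock W ▸ hW) (hblock Wt ▸ hWt)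

end
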